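/- Let n = n_1 + n_2 + … + n_l and, for i = 1,…,l, let A_i = {0}^{n_1} × … × {0}^{n_{i−1}} × (F_{q^m}^{n_i} minus {0}) × F_{q^m}^{n_{i+1}} × … × F_{q^m}^{n_l} ⊆ F_{q^m}^n. For every F_{q^m}-linear subspace D ⊆ F_{q^m}^n there exist F_{q^m}-linear subspaces D_i' ⊆ span(D ∩ A_i), one for each index i with D ∩ A_i ≠ ∅, such that D is the (internal) direct sum of the D_i' over all i with D ∩ A_i ≠ ∅, and D_i' ∩ A_j = ∅ for all j > i. -/
import Mathlib


open Submodule Module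

noncomputable section

/-- The set `A_i = {0}^{n_1} × ⋯ × {0}^{n_{i-1}} × (F_{q^m}^{n_i} ∖ {0}) × F_{q^m}^{n_{i+1}} × ⋯`:
vectors whose first `i-1` blocks vanish and whose `i`-th block is nonzero. -/
def Aset (Fqm : Type) [Field Fqm] {l : ℕ} (nv : Fin l → ℕ) (i : Fin l) :
    Set ((Σ j : Fin l, Fin (nv j)) → Fqm) :=
  { x | (∀ j : Fin l, j < i → ∀ b : Fin (nv j), x ⟨j, b⟩ = 0) ∧ ∃ b : Fin (nv i), x ⟨i, b⟩ ≠ 0 }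

/-- The submodule of vectors whose blocks with index `< i` vanish. -/
def Kmod (Fqm : Type) [Field Fqm] {l : ℕ} (nv : Fin l → ℕ) (i : ℕ) :
    Submodule Fqm ((Σ j : Fin l, Fin (nv j)) → Fqm) where
  carrier := { x | ∀ j : Fin l, (j : ℕ) < i → ∀ b : Fin (nv j), x ⟨j, b⟩ = 0 }
  add_mem' := by
    intro a b ha hb j hj c
    simp only [Pi.add_apply, ha j hj c, hb j hj c, add_zero]
  zero_mem' := by intro j hj c; rfl
  smul_mem' := by
    intro r x hx j hj c
    simp only [Pi.smul_apply, hx j hj c, smul_zero]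

theorem Kmod_antitone (Fqm : Type) [Field Fqm] {l : ℕ} (nv : Fin l → ℕ) :
    Antitone (Kmod Fqm nv) := by
  intro i j hij x hx k hk b
  exact hx k (lt_of_lt_of_le hk hij) b

/-- Lemma 3: for every subspace `D ⊆ F_{q^m}^n`, `n = n_1 + ⋯ + n_l`,
there are subspaces `D_i' ⊆ span(D ∩ A_i)` (forced to be `0` when `D ∩ A_i = ∅`, since then
`span(D ∩ A_i) = 0`) such that `D` is the internal direct sum of the `D_i'` and
`D_i' ∩ A_j = ∅` for `j > i`. -/
theorem subspace_block_decomposition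
    (Fqm : Type) [Field Fqm] {l : ℕ} {nv : Fin l → ℕ}
    (D : Submodule Fqm ((Σ j : Fin l, Fin (nv j)) → Fqm)) :
    ∃ D' : Fin l → Submodule Fqm ((Σ j : Fin l, Fin (nv j)) → Fqm),
      (∀ i, D' i ≤ Submodule.span Fqm ((D : Set ((Σ j : Fin l, Fin (nv j)) → Fqm)) ∩ Aset Fqm nv i)) ∧
      iSup D' = D ∧ iSupIndep D' ∧
      ∀ i j : Fin l, i < j → ∀ x ∈ D' i, x ∉ Aset Fqm nv j := by
  classical
  set V := (Σ j : Fin l, Fin (nv j)) → Fqm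
  set F : ℕ → Submodule Fqm V := fun i => D ⊓ Kmod Fqm nv i with hFdef
  have hFanti : Antitone F := fun i j hij =>
    inf_le_inf le_rfl (Kmod_antitone Fqm nv hij)
  have hF0 : F 0 = D := by
    apply le_antisymm inf_le_left
    intro x hx
    exact ⟨hx, fun j hj b => absurd hj (Nat.not_lt_zero _)⟩
  have hFl : ∀ i, l ≤ i → F i = ⊥ := by
    intro i hi
    apply le_antisymm _ bot_le
    intro x hx
    have hx2 := hx.2
    funext c
    exact hx2 c.1 (lt_of_lt_of_le c.1.isLt hi) c.2
  -- choose complements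
  choose W hW using fun i : Fin l =>
    Submodule.exists_isCompl ((F ((i : ℕ) + 1)).comap (F (i : ℕ)).subtype)
  set D' : Fin l → Submodule Fqm V := fun i => (W i).map (F (i : ℕ)).subtype with hD'def
  have hsub : ∀ i : Fin l, D' i ≤ F (i : ℕ) := fun i => Submodule.map_subtype_le _ _
  have hsup : ∀ i : Fin l, D' i ⊔ F ((i : ℕ) + 1) = F (i : ℕ) := by
    intro i
    have h1 : F ((i : ℕ) + 1) ≤ F (i : ℕ) := hFanti (Nat.le_succ _)
    have h2 : ((F ((i : ℕ) + 1)).comap (F (i : ℕ)).subtype).map (F (i : ℕ)).subtype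
        = F ((i : ℕ) + 1) := by
      rw [Submodule.map_comap_subtype, inf_eq_right.mpr h1]
    calc D' i ⊔ F ((i : ℕ) + 1)
        = (W i ⊔ (F ((i : ℕ) + 1)).comap (F (i : ℕ)).subtype).map (F (i : ℕ)).subtype := by
          rw [Submodule.map_sup, h2]
      _ = F (i : ℕ) := by
          rw [sup_comm, (hW i).sup_eq_top, Submodule.map_top, Submodule.range_subtype]
  have hdisj : ∀ i : Fin l, ∀ x, x ∈ D' i → x ∈ F ((i : ℕ) + 1) → x = 0 := by
    intro i x hx hx'
    obtain ⟨y, hy, rfl⟩ := hx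
    have hy' : y ∈ (F ((i : ℕ) + 1)).comap (F (i : ℕ)).subtype := hx'
    have : y ∈ (F ((i : ℕ) + 1)).comap (F (i : ℕ)).subtype ⊓ W i := ⟨hy', hy⟩
    rw [(hW i).inf_eq_bot] at this
    rw [this]; rfl
  have hA : ∀ i : Fin l, ∀ x, x ∈ D' i → x ≠ 0 →
      x ∈ (D : Set V) ∩ Aset Fqm nv i := by
    intro i x hx hx0
    have hxF : x ∈ F (i : ℕ) := hsub i hx
    have hxD : x ∈ D := hxF.1
    have hxK : ∀ j : Fin l, (j : ℕ) < (i : ℕ) → ∀ b : Fin (nv j), x ⟨j, b⟩ = 0 := hxF.2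
    have hxnot : x ∉ Kmod Fqm nv ((i : ℕ) + 1) := by
      intro hk
      exact hx0 (hdisj i x hx ⟨hxD, hk⟩)
    refine ⟨hxD, fun j hj b => hxK j hj b, ?_⟩
    by_contra hb
    push_neg at hb
    apply hxnot
    intro j hj b
    rcases Nat.lt_succ_iff_lt_or_eq.mp hj with h | h
    · exact hxK j h b
    · have : j = i := Fin.ext h
      subst this
      exact hb b
  -- the big sup over indices < i
  set S : ℕ → Submodule Fqm V := fun i => ⨆ (j : Fin l) (_ : (j : ℕ) < i), D' j with hSdef
  have hS_succ : ∀ i : ℕ, ∀ hi : i < l, S (i + 1) = S i ⊔ D' ⟨i, hi⟩ := by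
    intro i hi
    apply le_antisymm
    · refine iSup_le fun j => iSup_le fun hj => ?_
      rcases Nat.lt_succ_iff_lt_or_eq.mp hj with h | h
      · exact le_sup_of_le_left (le_iSup_of_le j (le_iSup_of_le h le_rfl))
      · have : j = ⟨i, hi⟩ := Fin.ext h
        subst this
        exact le_sup_right
    · refine sup_le ?_ ?_
      · refine iSup_le fun j => iSup_le fun hj => ?_
        exact le_iSup_of_le j (le_iSup_of_le (Nat.lt_succ_of_lt hj) le_rfl)
      · exact le_iSup_of_le ⟨i, hi⟩ (le_iSup_of_le (Nat.lt_succ_self i) le_rfl)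
  have hS_succ' : ∀ i : ℕ, ¬ i < l → S (i + 1) = S i := by
    intro i hi
    apply le_antisymm
    · refine iSup_le fun j => iSup_le fun hj => ?_
      have : (j : ℕ) < i := by
        have := j.isLt; omega
      exact le_iSup_of_le j (le_iSup_of_le this le_rfl)
    · refine iSup_le fun j => iSup_le fun hj => ?_
      exact le_iSup_of_le j (le_iSup_of_le (Nat.lt_succ_of_lt hj) le_rfl)
  have hSdisj : ∀ i : ℕ, ∀ x, x ∈ F i → x ∈ S i → x = 0 := by
    intro i
    induction i with
    | zero =>
      intro x _ hx
      have : S 0 = ⊥ := by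
        refine le_antisymm (iSup_le fun j => iSup_le fun hj => absurd hj (Nat.not_lt_zero _)) bot_le
      rw [this] at hx
      exact hx
    | succ i ih =>
      intro x hxF hxS
      by_cases hi : i < l
      · rw [hS_succ i hi] at hxS
        rw [Submodule.mem_sup] at hxS
        obtain ⟨s, hs, d, hd, rfl⟩ := hxS
        have hdF : d ∈ F i := hsub ⟨i, hi⟩ hd
        have hsF : s ∈ F i := by
          have : s = (s + d) - d := by ring
          rw [this]
          exact Submodule.sub_mem _ (hFanti (Nat.le_succ i) hxF) hdF
        have hs0 : s = 0 := ih s hsF hs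
        subst hs0
        rw [zero_add] at hxF ⊢
        exact hdisj ⟨i, hi⟩ d hd hxF
      · rw [hS_succ' i hi] at hxS
        exact ih x (hFanti (Nat.le_succ i) hxF) hxS
  refine ⟨D', ?_, ?_, ?_, ?_⟩
  · intro i x hx
    by_cases hx0 : x = 0
    · rw [hx0]; exact Submodule.zero_mem _
    · exact Submodule.subset_span (hA i x hx hx0)
  · apply le_antisymm
    · exact iSup_le fun i => le_trans (hsub i) inf_le_left
    · have key : ∀ d i : ℕ, l ≤ i + d → F i ≤ iSup D' := by
        intro d
        induction d with
        | zero =>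
          intro i hi
          rw [hFl i (by omega)]
          exact bot_le
        | succ d ih =>
          intro i hi
          by_cases hil : i < l
          · rw [← hsup ⟨i, hil⟩]
            exact sup_le (le_iSup D' ⟨i, hil⟩) (ih (i + 1) (by omega))
          · rw [hFl i (by omega)]
            exact bot_le
      rw [← hF0]
      exact key l 0 (by omega)
  · intro i
    rw [disjoint_def]
    intro x hxD' hxSup
    have hle : (⨆ (j : Fin l) (_ : j ≠ i), D' j) ≤ S (i : ℕ) ⊔ F ((i : ℕ) + 1) := by
      refine iSup_le fun j => iSup_le fun hj => ?_
      rcases lt_trichotomy ((j : ℕ)) ((i : ℕ)) with h | h | h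
      · exact le_sup_of_le_left (le_iSup_of_le j (le_iSup_of_le h le_rfl))
      · exact absurd (Fin.ext h) hj
      · exact le_sup_of_le_right (le_trans (hsub j) (hFanti h))
    have hx2 : x ∈ S (i : ℕ) ⊔ F ((i : ℕ) + 1) := hle hxSup
    rw [Submodule.mem_sup] at hx2
    obtain ⟨s, hs, f, hf, hx⟩ := hx2
    have hxF : x ∈ F (i : ℕ) := hsub i hxD'
    have hfF : f ∈ F (i : ℕ) := hFanti (Nat.le_succ _) hf
    have hsF : s ∈ F (i : ℕ) := by
      have : s = x - f := by rw [← hx]; ring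
      rw [this]
      exact Submodule.sub_mem _ hxF hfF
    have hs0 : s = 0 := hSdisj (i : ℕ) s hsF hs
    subst hs0
    rw [zero_add] at hx
    subst hx
    exact hdisj i f hxD' hf
  · intro i j hij x hx hxA
    by_cases hx0 : x = 0
    · obtain ⟨b, hb⟩ := hxA.2
      rw [hx0] at hb
      exact hb rfl
    · obtain ⟨-, ⟨-, b, hb⟩⟩ := hA i x hx hx0
      exact hb (hxA.1 i hij b)
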